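/- arXiv:1903.10062 — 2 statements merged into one kernel-verified Lean document; each statement's English description precedes it below -/
import Mathlib

section
/- Let γ and α be bounded operators on a Hilbert space H with γ self-adjoint, such that the 2×2 block operator matrix with entries (γ, α; α*, 1 − γ̄) satisfies 0 ≤ (γ, α; α*, 1 − γ̄) ≤ 1 on H ⊕ H (where γ̄ denotes the complex conjugate of γ). Then γ² + α α* ≤ γ as operators on H. In particular 0 ≤ γ ≤ 1. -/
/-!
Write `Γ` for the block operator and `q v = ⟪v, Γ v⟫`. For any `v`, positivity at `v - Γ v`
and `Γ ≤ 1` at `Γ v` give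
`0 ≤ q (v - Γ v) = q (Γ v) + q v - 2 ‖Γ v‖² ≤ q v - ‖Γ v‖²`, i.e. `Γ² ≤ Γ` in the form sense.
At `v = (f, 0)` we have `Γ v = (γ f, α† f)`, so this reads `‖γ f‖² + ‖α† f‖² ≤ ⟪f, γ f⟫`, the
upper-left block of `Γ² ≤ Γ`. Then `γ ≥ γ² + α α† ≥ 0`, and `γ ≤ 1` is `Γ ≤ 1` at `(f, 0)`.
-/

open ContinuousLinearMap

section

variable {H : Type*} [NormedAddCommGroup H] [InnerProductSpace ℂ H]

/-- `⟪(f, g), Γ (f, g)⟫` for the block operator `Γ = (γ, α; α†, 1 - gbar)` on `H ⊕ H`. -/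
noncomputable def blockQuadForm (γ α gbar : H →L[ℂ] H) (f g : H) : ℝ :=
  (inner ℂ f (γ f) : ℂ).re + 2 * (inner ℂ f (α g) : ℂ).re
    + ((inner ℂ g g : ℂ).re - (inner ℂ g (gbar g) : ℂ).re)

lemma Complex.re_inner_self_eq_norm_sq (x : H) : (inner ℂ x x : ℂ).re = ‖x‖ ^ 2 :=
  inner_self_eq_norm_sq (𝕜 := ℂ) x

variable [CompleteSpace H] {γ : H →L[ℂ] H}

lemma blockQuadForm_sub_image (hγ : IsSelfAdjoint γ) (α gbar : H →L[ℂ] H) (f : H) :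
    blockQuadForm γ α gbar (f - γ f) (-(adjoint α f)) =
      blockQuadForm γ α gbar (γ f) (adjoint α f) + (inner ℂ f (γ f) : ℂ).re
        - 2 * (‖γ f‖ ^ 2 + ‖adjoint α f‖ ^ 2) := by
  have hγγ : inner ℂ f (γ (γ f)) = inner ℂ (γ f) (γ f) := (hγ.isSymmetric f (γ f)).symm
  have hαα : inner ℂ f (α (adjoint α f)) = inner ℂ (adjoint α f) (adjoint α f) :=
    (adjoint_inner_left α (adjoint α f) f).symm
  simp only [blockQuadForm, map_sub, map_neg, inner_sub_left, inner_sub_right, inner_neg_left,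
    inner_neg_right, neg_neg, Complex.sub_re, Complex.neg_re, hγγ, hαα,
    Complex.re_inner_self_eq_norm_sq]
  ring

lemma norm_sq_add_norm_sq_le_re_inner {α gbar : H →L[ℂ] H} (hγ : IsSelfAdjoint γ)
    (hpos : ∀ f g, 0 ≤ blockQuadForm γ α gbar f g)
    (hle : ∀ f g, blockQuadForm γ α gbar f g ≤ ‖f‖ ^ 2 + ‖g‖ ^ 2) (f : H) :
    ‖γ f‖ ^ 2 + ‖adjoint α f‖ ^ 2 ≤ (inner ℂ f (γ f) : ℂ).re := by
  have hsub := hpos (f - γ f) (-(adjoint α f))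
  rw [blockQuadForm_sub_image hγ] at hsub
  linarith [hle (γ f) (adjoint α f)]

lemma re_inner_sub_comp_self_add_comp_adjoint (hγ : IsSelfAdjoint γ) (α : H →L[ℂ] H) (f : H) :
    (inner ℂ ((γ - (γ ∘L γ + α ∘L adjoint α)) f) f : ℂ).re =
      (inner ℂ f (γ f) : ℂ).re - (‖γ f‖ ^ 2 + ‖adjoint α f‖ ^ 2) := by
  have hγf : inner ℂ (γ f) f = inner ℂ f (γ f) := hγ.isSymmetric f f
  have hγγ : inner ℂ (γ (γ f)) f = inner ℂ (γ f) (γ f) := hγ.isSymmetric (γ f) f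
  have hαα : inner ℂ (α (adjoint α f)) f = inner ℂ (adjoint α f) (adjoint α f) :=
    (adjoint_inner_right α (adjoint α f) f).symm
  simp only [sub_apply, add_apply, comp_apply, inner_sub_left, inner_add_left, Complex.sub_re,
    Complex.add_re, hγf, hγγ, hαα, Complex.re_inner_self_eq_norm_sq]

lemma isPositive_comp_self_add_comp_adjoint (hγ : IsSelfAdjoint γ) (α : H →L[ℂ] H) :
    (γ ∘L γ + α ∘L adjoint α).IsPositive := by
  simpa only [hγ.adjoint_eq] using
    (isPositive_adjoint_comp_self γ).add (isPositive_self_comp_adjoint α)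

end

theorem hfb_operator_inequality_general {H : Type*} [NormedAddCommGroup H] [InnerProductSpace ℂ H]
    [CompleteSpace H]
    (γ α gbar : H →L[ℂ] H)
    (hγ : IsSelfAdjoint γ)
    -- `0 ≤ Γ` on `H ⊕ H`, via the quadratic form of the block matrix:
    (hpos : ∀ f g : H, 0 ≤ (inner ℂ f (γ f) : ℂ).re + 2 * (inner ℂ f (α g) : ℂ).re
        + ((inner ℂ g g : ℂ).re - (inner ℂ g (gbar g) : ℂ).re))
    -- `Γ ≤ 1` on `H ⊕ H`:
    (hle : ∀ f g : H, (inner ℂ f (γ f) : ℂ).re + 2 * (inner ℂ f (α g) : ℂ).re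
        + ((inner ℂ g g : ℂ).re - (inner ℂ g (gbar g) : ℂ).re) ≤ ‖f‖ ^ 2 + ‖g‖ ^ 2) :
    (γ - (γ ∘L γ + α ∘L (ContinuousLinearMap.adjoint α))).IsPositive ∧
      γ.IsPositive ∧ ((1 : H →L[ℂ] H) - γ).IsPositive := by
  have hsq := isPositive_comp_self_add_comp_adjoint hγ α
  have hmain : (γ - (γ ∘L γ + α ∘L adjoint α)).IsPositive := by
    refine isPositive_def'.2 ⟨hγ.sub hsq.isSelfAdjoint, fun f => ?_⟩
    rw [reApplyInnerSelf_apply, RCLike.re_to_complex, re_inner_sub_comp_self_add_comp_adjoint hγ]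
    exact sub_nonneg.2 (norm_sq_add_norm_sq_le_re_inner hγ hpos hle f)
  refine ⟨hmain, by simpa using hmain.add hsq, isPositive_def'.2 ⟨.sub (.one _) hγ, fun f => ?_⟩⟩
  have hγf : inner ℂ (γ f) f = inner ℂ f (γ f) := hγ.isSymmetric f f
  have hle_f : (inner ℂ f (γ f) : ℂ).re ≤ ‖f‖ ^ 2 := by
    simpa using hle f 0
  rw [reApplyInnerSelf_apply, RCLike.re_to_complex]
  simp only [sub_apply, one_apply_eq_self, inner_sub_left, Complex.sub_re,
    Complex.re_inner_self_eq_norm_sq, hγf]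
  linarith

/-- Structural operator inequality for HFB states: if the block operator matrix
`(γ, α; α*, 1 - γ̄)` satisfies `0 ≤ Γ ≤ 1` (expressed via its quadratic form on `H ⊕ H`),
where `γ̄ = J γ J` with `J` a conjugation (antilinear isometric involution), then
`γ² + α α* ≤ γ`; in particular `0 ≤ γ ≤ 1`. -/
theorem hfb_operator_inequality {H : Type*} [NormedAddCommGroup H] [InnerProductSpace ℂ H]
    [CompleteSpace H]
    (γ α gbar : H →L[ℂ] H)
    (hγ : IsSelfAdjoint γ)
    (J : H → H)
    (hJadd : ∀ x y, J (x + y) = J x + J y)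
    (hJsmul : ∀ (c : ℂ) x, J (c • x) = (starRingEnd ℂ) c • J x)
    (hJinv : ∀ x, J (J x) = x)
    (hJinner : ∀ x y, (inner ℂ (J x) (J y) : ℂ) = (starRingEnd ℂ) (inner ℂ x y))
    (hgbar : ∀ x, gbar x = J (γ (J x)))
    -- `0 ≤ Γ` on `H ⊕ H`, via the quadratic form of the block matrix:
    (hpos : ∀ f g : H, 0 ≤ (inner ℂ f (γ f) : ℂ).re + 2 * (inner ℂ f (α g) : ℂ).re
        + ((inner ℂ g g : ℂ).re - (inner ℂ g (gbar g) : ℂ).re))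
    -- `Γ ≤ 1` on `H ⊕ H`:
    (hle : ∀ f g : H, (inner ℂ f (γ f) : ℂ).re + 2 * (inner ℂ f (α g) : ℂ).re
        + ((inner ℂ g g : ℂ).re - (inner ℂ g (gbar g) : ℂ).re) ≤ ‖f‖ ^ 2 + ‖g‖ ^ 2) :
    (γ - (γ ∘L γ + α ∘L (ContinuousLinearMap.adjoint α))).IsPositive ∧
      γ.IsPositive ∧ ((1 : H →L[ℂ] H) - γ).IsPositive :=
  hfb_operator_inequality_general γ α gbar hγ hpos hle
end

section
/- Suppose the massless Chandrasekhar problem at unit mass and critical coupling, E^{Ch}_{τ_c}(1)|_{m=0} = inf { K_cl ∫ρ^{4/3} − (τ_c/2) D(ρ,ρ) : ρ ≥ 0, ∫ρ = 1 }, equals 0, and that the Hardy–Littlewood–Sobolev inequality (τ_c/2) D(ρ,ρ) ≤ K_cl ‖ρ‖_{4/3}^{4/3} ‖ρ‖_1^{2/3} holds for all admissible ρ with some ρ* achieving equality only when ∫ρ* = 1 after normalization. Then for every 0 < ν < 1, the problem E^{Ch}_{τ_c}(ν)|_{m=0} = 0 admits no minimizer: there is no ρ ≥ 0 in L¹ ∩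 L^{4/3}(ℝ³) with ∫ρ = ν and K_cl ∫ρ^{4/3} = (τ_c/2) D(ρ,ρ). -/
open MeasureTheory

theorem integral_rpow_toReal_pos_of_integral_ne_zero {α : Type*} [MeasurableSpace α]
    {μ : Measure α} {f : α → ℝ} {p : ENNReal} (hp0 : p ≠ 0) (hp : p ≠ ⊤)
    (hf : MemLp f p μ) (hf0 : ∀ x, 0 ≤ f x) (hmass : ∫ x, f x ∂μ ≠ 0) :
    0 < ∫ x, f x ^ p.toReal ∂μ := by
  have hint : Integrable (fun x => f x ^ p.toReal) μ := by
    simpa only [Real.norm_of_nonneg (hf0 _)] using hf.integrable_norm_rpow hp0 hp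
  refine (integral_nonneg fun x => Real.rpow_nonneg (hf0 x) _).lt_of_ne' fun h => hmass ?_
  have hzero : ∀ᵐ x ∂μ, f x ^ p.toReal = 0 :=
    (integral_eq_zero_iff_of_nonneg (fun x => Real.rpow_nonneg (hf0 x) _) hint).1 h
  refine integral_eq_zero_of_ae ?_
  filter_upwards [hzero] with x hx
  exact (Real.rpow_eq_zero (hf0 x) (ENNReal.toReal_pos hp0 hp).ne').1 hx

theorem massless_critical_no_minimizer_general
    (τc Kcl : ℝ) (hKcl : 0 < Kcl)
    -- the Hardy–Littlewood–Sobolev inequality with optimal constant `τ_c`: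
    (hHLS : ∀ ρ : EuclideanSpace ℝ (Fin 3) → ℝ, (∀ x, 0 ≤ ρ x) →
      MemLp ρ 1 (volume : Measure (EuclideanSpace ℝ (Fin 3))) →
      MemLp ρ (4 / 3) (volume : Measure (EuclideanSpace ℝ (Fin 3))) →
      τc / 2 * (∫ x : EuclideanSpace ℝ (Fin 3), ∫ y : EuclideanSpace ℝ (Fin 3),
          ρ x * ρ y / ‖x - y‖)
        ≤ Kcl * (∫ x : EuclideanSpace ℝ (Fin 3), ρ x ^ ((4 : ℝ) / 3))
            * (∫ x : EuclideanSpace ℝ (Fin 3), ρ x) ^ ((2 : ℝ) / 3))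
    (ν : ℝ) (hν0 : 0 < ν) (hν1 : ν < 1) :
    ¬ ∃ ρ : EuclideanSpace ℝ (Fin 3) → ℝ, (∀ x, 0 ≤ ρ x) ∧
      MemLp ρ 1 (volume : Measure (EuclideanSpace ℝ (Fin 3))) ∧
      MemLp ρ (4 / 3) (volume : Measure (EuclideanSpace ℝ (Fin 3))) ∧
      (∫ x : EuclideanSpace ℝ (Fin 3), ρ x) = ν ∧
      Kcl * (∫ x : EuclideanSpace ℝ (Fin 3), ρ x ^ ((4 : ℝ) / 3))
        = τc / 2 * (∫ x : EuclideanSpace ℝ (Fin 3), ∫ y : EuclideanSpace ℝ (Fin 3),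
            ρ x * ρ y / ‖x - y‖) := by
  rintro ⟨ρ, hρ0, hρ1, hρ43, hmass, hsaturated⟩
  have hkinetic : 0 < ∫ x, ρ x ^ ((4 : ℝ) / 3) := by
    have h := integral_rpow_toReal_pos_of_integral_ne_zero (by norm_num)
      (ENNReal.div_ne_top (by norm_num) (by norm_num)) hρ43 hρ0
      (hmass ▸ hν0.ne')
    rwa [show ((4 : ENNReal) / 3).toReal = 4 / 3 by norm_num] at h
  have hHLSρ := hHLS ρ hρ0 hρ1 hρ43
  rw [← hsaturated, hmass] at hHLSρ
  -- the mass factor `ν ^ (2/3) < 1` makes the HLS bound strictly smaller than its saturation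
  have hstrict := mul_lt_of_lt_one_right (mul_pos hKcl hkinetic)
    (Real.rpow_lt_one hν0.le hν1 (by norm_num : (0 : ℝ) < 2 / 3))
  exact hstrict.not_ge hHLSρ

/-- Nonexistence of minimizers for the massless critical Chandrasekhar problem at
subcritical mass `0 < ν < 1`: no nonnegative `ρ ∈ L¹ ∩ L^{4/3}` with `∫ρ = ν` can satisfy
`K_cl ∫ρ^{4/3} = (τ_c/2) D(ρ,ρ)`. -/
theorem massless_critical_no_minimizer
    (τc Kcl : ℝ) (hτc : 0 < τc) (hKcl : 0 < Kcl)
    -- `E^{Ch}_{τ_c}(1)|_{m=0} = 0`: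
    (hE : sInf ((fun ρ : EuclideanSpace ℝ (Fin 3) → ℝ =>
        Kcl * (∫ x : EuclideanSpace ℝ (Fin 3), ρ x ^ ((4 : ℝ) / 3))
          - τc / 2 * (∫ x : EuclideanSpace ℝ (Fin 3), ∫ y : EuclideanSpace ℝ (Fin 3),
              ρ x * ρ y / ‖x - y‖)) ''
      {ρ | (∀ x, 0 ≤ ρ x) ∧
        MemLp ρ 1 (volume : Measure (EuclideanSpace ℝ (Fin 3))) ∧
        MemLp ρ (4 / 3) (volume : Measure (EuclideanSpace ℝ (Fin 3))) ∧
        (∫ x : EuclideanSpace ℝ (Fin 3), ρ x) = 1}) = 0)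
    -- the Hardy–Littlewood–Sobolev inequality with optimal constant `τ_c`:
    (hHLS : ∀ ρ : EuclideanSpace ℝ (Fin 3) → ℝ, (∀ x, 0 ≤ ρ x) →
      MemLp ρ 1 (volume : Measure (EuclideanSpace ℝ (Fin 3))) →
      MemLp ρ (4 / 3) (volume : Measure (EuclideanSpace ℝ (Fin 3))) →
      τc / 2 * (∫ x : EuclideanSpace ℝ (Fin 3), ∫ y : EuclideanSpace ℝ (Fin 3),
          ρ x * ρ y / ‖x - y‖)
        ≤ Kcl * (∫ x : EuclideanSpace ℝ (Fin 3), ρ x ^ ((4 : ℝ) / 3))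
            * (∫ x : EuclideanSpace ℝ (Fin 3), ρ x) ^ ((2 : ℝ) / 3))
    -- some normalized optimizer `ρ*` achieves equality with `∫ρ* = 1`:
    (hopt : ∃ ρstar : EuclideanSpace ℝ (Fin 3) → ℝ, (∀ x, 0 ≤ ρstar x) ∧
      MemLp ρstar 1 (volume : Measure (EuclideanSpace ℝ (Fin 3))) ∧
      MemLp ρstar (4 / 3) (volume : Measure (EuclideanSpace ℝ (Fin 3))) ∧
      (∫ x : EuclideanSpace ℝ (Fin 3), ρstar x) = 1 ∧
      τc / 2 * (∫ x : EuclideanSpace ℝ (Fin 3), ∫ y : EuclideanSpace ℝ (Fin 3),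
          ρstar x * ρstar y / ‖x - y‖)
        = Kcl * (∫ x : EuclideanSpace ℝ (Fin 3), ρstar x ^ ((4 : ℝ) / 3)))
    (ν : ℝ) (hν0 : 0 < ν) (hν1 : ν < 1) :
    ¬ ∃ ρ : EuclideanSpace ℝ (Fin 3) → ℝ, (∀ x, 0 ≤ ρ x) ∧
      MemLp ρ 1 (volume : Measure (EuclideanSpace ℝ (Fin 3))) ∧
      MemLp ρ (4 / 3) (volume : Measure (EuclideanSpace ℝ (Fin 3))) ∧
      (∫ x : EuclideanSpace ℝ (Fin 3), ρ x) = ν ∧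
      Kcl * (∫ x : EuclideanSpace ℝ (Fin 3), ρ x ^ ((4 : ℝ) / 3))
        = τc / 2 * (∫ x : EuclideanSpace ℝ (Fin 3), ∫ y : EuclideanSpace ℝ (Fin 3),
            ρ x * ρ y / ‖x - y‖) :=
  massless_critical_no_minimizer_general τc Kcl hKcl hHLS ν hν0 hν1
end
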